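/- arXiv:1709.00703 — 2 statements merged into one kernel-verified Lean document; each statement's English description precedes it below -/
import Mathlib

section
/- Let A : ℝ → ℝ be Lipschitz with constant L. Then the Cauchy integral operator C_Γ is 1-1-homogeneous: there exists a constant c > 0 depending only on L (one may take c = 2/(π(L²+1)) up to an absolute factor) such that for every M > 10, every r > 0, and all disjoint intervals I₀ = (x₀ − r, x₀ + r) and I₁ = (x₁ − r, x₁ + r) satisfying Mr ≤ |y₀ − y₁| ≤ 2Mr for all y₀ ∈ I₀ and y₁ ∈ I₁, one has |C_Γ(χ_{I₁})(x)| ≥ c/M for all x ∈ I₀. -/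
/-!
The point `x` lies at distance between `M r` and `2 M r` from every point of `I₁`, so the
principal value is an ordinary integral over `I₁`. On `I₁` the real part
`(y - x) / ((y - x)² + (A y - A x)²)` of the kernel keeps the sign of `y - x`, which is
constant because `x ∉ I₁`, and the Lipschitz bound gives it absolute value at least
`1 / ((1 + L²) |y - x|) ≥ 1 / (2 (1 + L²) M r)`. Integrating over `I₁`, of length `2 r`, gives
`|C_Γ χ_{I₁}(x)| ≥ 1 / ((1 + L²) M)`.
-/

open MeasureTheory Filter Set

/-- The Cauchy kernel `K(x,y) = 1/(y - x + i(A(y) - A(x)))` associated to `A`. -/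
noncomputable def cauchyKernel (A : ℝ → ℝ) (x y : ℝ) : ℂ :=
  ((y : ℂ) - (x : ℂ) + Complex.I * ((A y : ℂ) - (A x : ℂ)))⁻¹

/-- `cauchyPV A f x v` : the principal value `C_Γ f (x)` exists and equals `v`. -/
def cauchyPV (A : ℝ → ℝ) (f : ℝ → ℂ) (x : ℝ) (v : ℂ) : Prop :=
  Filter.Tendsto (fun δ : ℝ => ∫ y in {y : ℝ | δ < |y - x|}, cauchyKernel A x y * f y)
    (nhdsWithin 0 (Set.Ioi 0)) (nhds v)

theorem Set.OrdConnected.forall_lt_or_forall_gt_of_notMem {α : Type*} [LinearOrder α]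
    {s : Set α} (hs : s.OrdConnected) {x : α} (hx : x ∉ s) :
    (∀ y ∈ s, x < y) ∨ ∀ y ∈ s, y < x := by
  by_contra! h
  obtain ⟨⟨a, ha, hax⟩, ⟨b, hb, hxb⟩⟩ := h
  exact hx (hs.out ha hb ⟨hax, hxb⟩)

theorem le_norm_setIntegral_of_le_abs_re {α : Type*} [MeasurableSpace α] {μ : Measure α}
    {s : Set α} {g : α → ℂ} {c : ℝ} (hs : MeasurableSet s) (hμs : μ s ≠ ⊤)
    (hg : IntegrableOn g s μ)
    (hsign : (∀ y ∈ s, 0 ≤ (g y).re) ∨ ∀ y ∈ s, (g y).re ≤ 0)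
    (hc : ∀ y ∈ s, c ≤ |(g y).re|) :
    c * μ.real s ≤ ‖∫ y in s, g y ∂μ‖ := by
  rcases hsign with hnonneg | hnonpos
  · calc c * μ.real s ≤ ∫ y in s, (g y).re ∂μ :=
          setIntegral_ge_of_const_le_real hs hμs
            (fun y hy => (hc y hy).trans_eq (abs_of_nonneg (hnonneg y hy))) hg.re
      _ = (∫ y in s, g y ∂μ).re := integral_re hg
      _ ≤ ‖∫ y in s, g y ∂μ‖ := Complex.re_le_norm _
  · calc c * μ.real s ≤ ∫ y in s, -(g y).re ∂μ :=
          setIntegral_ge_of_const_le_real hs hμs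
            (fun y hy => (hc y hy).trans_eq (abs_of_nonpos (hnonpos y hy))) hg.re.neg
      _ = -(∫ y in s, g y ∂μ).re := by rw [integral_neg]; exact congrArg _ (integral_re hg)
      _ ≤ ‖∫ y in s, g y ∂μ‖ := (neg_le_abs _).trans (Complex.abs_re_le_norm _)

section CauchyKernel

variable {A : ℝ → ℝ} {x y : ℝ}

theorem cauchyKernel_re (A : ℝ → ℝ) (x y : ℝ) :
    (cauchyKernel A x y).re = (y - x) / ((y - x) ^ 2 + (A y - A x) ^ 2) := by
  simp [cauchyKernel, Complex.inv_re, Complex.normSq_apply, sq]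

theorem cauchyKernel_re_nonneg (h : x ≤ y) : 0 ≤ (cauchyKernel A x y).re := by
  rw [cauchyKernel_re]
  exact div_nonneg (sub_nonneg.2 h) (by positivity)

theorem cauchyKernel_re_nonpos (h : y ≤ x) : (cauchyKernel A x y).re ≤ 0 := by
  rw [cauchyKernel_re]
  exact div_nonpos_of_nonpos_of_nonneg (sub_nonpos.2 h) (by positivity)

theorem norm_cauchyKernel_le (A : ℝ → ℝ) (x y : ℝ) : ‖cauchyKernel A x y‖ ≤ |y - x|⁻¹ := by
  rcases eq_or_ne y x with rfl | hxy
  · simp [cauchyKernel]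
  rw [cauchyKernel, norm_inv]
  refine inv_anti₀ (abs_pos.2 (sub_ne_zero.2 hxy)) ?_
  simpa using Complex.abs_re_le_norm ((y : ℂ) - x + Complex.I * ((A y : ℂ) - A x))

theorem one_div_le_abs_cauchyKernel_re {L : ℝ} (hA : ∀ x₁ x₂ : ℝ, |A x₁ - A x₂| ≤ L * |x₁ - x₂|)
    (hxy : y ≠ x) : 1 / ((1 + L ^ 2) * |y - x|) ≤ |(cauchyKernel A x y).re| := by
  have hd : 0 < |y - x| := abs_pos.2 (sub_ne_zero.2 hxy)
  have hA' : (A y - A x) ^ 2 ≤ L ^ 2 * (y - x) ^ 2 := by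
    simpa [mul_pow, sq_abs] using pow_le_pow_left₀ (abs_nonneg _) (hA y x) 2
  have hden : (y - x) ^ 2 + (A y - A x) ^ 2 ≤ (1 + L ^ 2) * |y - x| ^ 2 := by
    rw [sq_abs]; linarith
  have hden_pos : 0 < (y - x) ^ 2 + (A y - A x) ^ 2 := by
    rw [← sq_abs]; positivity
  rw [cauchyKernel_re, abs_div, abs_of_pos hden_pos]
  calc 1 / ((1 + L ^ 2) * |y - x|) = |y - x| / ((1 + L ^ 2) * |y - x| ^ 2) := by
        field_simp
    _ ≤ |y - x| / ((y - x) ^ 2 + (A y - A x) ^ 2) :=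
        div_le_div_of_nonneg_left hd.le hden_pos hden

theorem measurable_cauchyKernel (hA : Measurable A) (x : ℝ) : Measurable (cauchyKernel A x) := by
  unfold cauchyKernel
  fun_prop

theorem cauchyPV_of_eq_zero_near (A : ℝ → ℝ) {f : ℝ → ℂ} {δ₀ : ℝ} (hδ₀ : 0 < δ₀)
    (hf : ∀ y, |y - x| < δ₀ → f y = 0) :
    cauchyPV A f x (∫ y, cauchyKernel A x y * f y) := by
  refine tendsto_const_nhds.congr' ?_
  filter_upwards [Ioo_mem_nhdsGT hδ₀] with δ hδ
  refine (setIntegral_eq_integral_of_forall_compl_eq_zero fun y hy => ?_).symm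
  rw [hf y ((not_lt.1 hy).trans_lt hδ.2), mul_zero]

theorem continuous_of_abs_sub_le_mul {L : ℝ} (hA : ∀ x₁ x₂ : ℝ, |A x₁ - A x₂| ≤ L * |x₁ - x₂|) :
    Continuous A :=
  (LipschitzWith.of_dist_le' (K := L) fun a b => by
    simpa only [Real.dist_eq] using hA a b).continuous

variable {s : Set ℝ} {δ : ℝ}

theorem integrableOn_cauchyKernel (hA : Measurable A) (hs : MeasurableSet s)
    (hμs : volume s ≠ ⊤) (hδ : 0 < δ) (hfar : ∀ y ∈ s, δ ≤ |y - x|) :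
    IntegrableOn (cauchyKernel A x) s :=
  Measure.integrableOn_of_bounded hμs (measurable_cauchyKernel hA x).aestronglyMeasurable
    ((ae_restrict_mem hs).mono fun y hy =>
      (norm_cauchyKernel_le A x y).trans (inv_anti₀ hδ (hfar y hy)))

theorem cauchyPV_indicator_one (A : ℝ → ℝ) (hs : MeasurableSet s) (hδ : 0 < δ)
    (hfar : ∀ y ∈ s, δ ≤ |y - x|) :
    cauchyPV A (s.indicator fun _ => 1) x (∫ y in s, cauchyKernel A x y) := by
  have hpv := cauchyPV_of_eq_zero_near A (f := s.indicator fun _ => 1) hδ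
    fun y hy => indicator_of_notMem (fun hys => (hfar y hys).not_gt hy) _
  have hKs : (fun y => cauchyKernel A x y * s.indicator (fun _ => 1) y)
      = s.indicator (cauchyKernel A x) := by
    ext y
    simp only [← indicator_mul_right, mul_one]
  rwa [hKs, integral_indicator hs] at hpv

theorem le_norm_setIntegral_cauchyKernel {L D : ℝ}
    (hA : ∀ x₁ x₂ : ℝ, |A x₁ - A x₂| ≤ L * |x₁ - x₂|) (hs : MeasurableSet s)
    (hs_conn : s.OrdConnected) (hμs : volume s ≠ ⊤) (hδ : 0 < δ)
    (hfar : ∀ y ∈ s, δ ≤ |y - x| ∧ |y - x| ≤ D) :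
    volume.real s / ((1 + L ^ 2) * D) ≤ ‖∫ y in s, cauchyKernel A x y‖ := by
  have hxs : x ∉ s := fun h => by simpa using (hfar x h).1.trans_lt' hδ
  have hsign : (∀ y ∈ s, 0 ≤ (cauchyKernel A x y).re) ∨ ∀ y ∈ s, (cauchyKernel A x y).re ≤ 0 :=
    (hs_conn.forall_lt_or_forall_gt_of_notMem hxs).imp
      (fun h y hy => cauchyKernel_re_nonneg (h y hy).le)
      (fun h y hy => cauchyKernel_re_nonpos (h y hy).le)
  have hre : ∀ y ∈ s, 1 / ((1 + L ^ 2) * D) ≤ |(cauchyKernel A x y).re| := fun y hy =>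
    (one_div_le_one_div_of_le (mul_pos (by positivity) (hδ.trans_le (hfar y hy).1))
      (mul_le_mul_of_nonneg_left (hfar y hy).2 (by positivity))).trans
      (one_div_le_abs_cauchyKernel_re hA fun h => hxs (h ▸ hy))
  rw [div_eq_mul_one_div, mul_comm]
  exact le_norm_setIntegral_of_le_abs_re hs hμs
    (integrableOn_cauchyKernel (continuous_of_abs_sub_le_mul hA).measurable hs hμs hδ
      fun y hy => (hfar y hy).1) hsign hre

end CauchyKernel

theorem cauchy_integral_homogeneous_general
    (A : ℝ → ℝ) (L : ℝ)
    (hA : ∀ x₁ x₂ : ℝ, |A x₁ - A x₂| ≤ L * |x₁ - x₂|) :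
    ∃ c : ℝ, 0 < c ∧
      ∀ M : ℝ, 10 < M → ∀ r : ℝ, 0 < r → ∀ x₀ x₁ : ℝ,
        Disjoint (Set.Ioo (x₀ - r) (x₀ + r)) (Set.Ioo (x₁ - r) (x₁ + r)) →
        (∀ y₀ ∈ Set.Ioo (x₀ - r) (x₀ + r), ∀ y₁ ∈ Set.Ioo (x₁ - r) (x₁ + r),
          M * r ≤ |y₀ - y₁| ∧ |y₀ - y₁| ≤ 2 * M * r) →
        ∀ x ∈ Set.Ioo (x₀ - r) (x₀ + r),
          ∃ v : ℂ,
            cauchyPV A (Set.indicator (Set.Ioo (x₁ - r) (x₁ + r)) (fun _ => (1 : ℂ))) x v ∧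
            c / M ≤ ‖v‖ := by
  refine ⟨1 / (1 + L ^ 2), by positivity, fun M hM r hr x₀ x₁ _ hsep x hx => ?_⟩
  have hMr : 0 < M * r := by nlinarith
  have hfar : ∀ y ∈ Ioo (x₁ - r) (x₁ + r), M * r ≤ |y - x| ∧ |y - x| ≤ 2 * M * r :=
    fun y hy => by simpa only [abs_sub_comm y x] using hsep x hx y hy
  refine ⟨_, cauchyPV_indicator_one A measurableSet_Ioo hMr fun y hy => (hfar y hy).1, ?_⟩
  calc 1 / (1 + L ^ 2) / M = volume.real (Ioo (x₁ - r) (x₁ + r)) / ((1 + L ^ 2) * (2 * M * r)) := by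
        rw [Real.volume_real_Ioo_of_le (by linarith)]
        field_simp
        ring
    _ ≤ _ := le_norm_setIntegral_cauchyKernel hA measurableSet_Ioo ordConnected_Ioo
        measure_Ioo_lt_top.ne hMr hfar

/-- The Cauchy integral operator is `1`-`1`-homogeneous: there is `c > 0` depending only on
`L` such that for every `M > 10`, `r > 0` and disjoint intervals `I₀ = (x₀ - r, x₀ + r)`,
`I₁ = (x₁ - r, x₁ + r)` with `M r ≤ |y₀ - y₁| ≤ 2 M r` for all `y₀ ∈ I₀`, `y₁ ∈ I₁`, one has
`|C_Γ(χ_{I₁})(x)| ≥ c / M` for all `x ∈ I₀`. -/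
theorem cauchy_integral_homogeneous
    (A : ℝ → ℝ) (L : ℝ) (hL : 0 < L)
    (hA : ∀ x₁ x₂ : ℝ, |A x₁ - A x₂| ≤ L * |x₁ - x₂|) :
    ∃ c : ℝ, 0 < c ∧
      ∀ M : ℝ, 10 < M → ∀ r : ℝ, 0 < r → ∀ x₀ x₁ : ℝ,
        Disjoint (Set.Ioo (x₀ - r) (x₀ + r)) (Set.Ioo (x₁ - r) (x₁ + r)) →
        (∀ y₀ ∈ Set.Ioo (x₀ - r) (x₀ + r), ∀ y₁ ∈ Set.Ioo (x₁ - r) (x₁ + r),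
          M * r ≤ |y₀ - y₁| ∧ |y₀ - y₁| ≤ 2 * M * r) →
        ∀ x ∈ Set.Ioo (x₀ - r) (x₀ + r),
          ∃ v : ℂ,
            cauchyPV A (Set.indicator (Set.Ioo (x₁ - r) (x₁ + r)) (fun _ => (1 : ℂ))) x v ∧
            c / M ≤ ‖v‖ :=
  cauchy_integral_homogeneous_general A L hA
end

section
/- Let A : ℝ → ℝ be Lipschitz with constant L and let K(x,y) = 1/(y − x + i(A(y) − A(x))). Let p ∈ (1,∞). Then there is a constant C (depending only on L and p) such that for every ε ∈ (0, 1/2), every z ∈ ℝ with z ≠ 0, and every g ∈ L^p(ℝ), ∫_ℝ (∫_{|x−y| > ε^{−1}|z|} |K(x,y) − K(x+z,y)| |g(y)| dy)^p dx ≤ C ε^p ‖g‖_{L^p(ℝ)}^p. -/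
/-!
For `|x - y| > ε⁻¹|z| ≥ 2|z|` the Lipschitz bound on `A` gives the standard smoothness estimate
`|K(x,y) - K(x+z,y)| ≤ 2(1+L)|z| / (x-y)²`. So with `R = ε⁻¹|z|` the inner integral is at most
`2(1+L)|z|` times the convolution of `|g|` with the truncated kernel `1_{|t|>R} t⁻²`, whose
integral is `2/R`. Young's inequality `‖f ⋆ k‖_p ≤ ‖k‖_1 ‖f‖_p` (Hölder at each point, then
Tonelli) yields the bound with `C = (4(1+L))^p`.
-/

open MeasureTheory Filter Set
open scoped ENNReal

theorem norm_cauchyKernel_sub_le {A : ℝ → ℝ} {L : ℝ}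
    (hA : ∀ x₁ x₂ : ℝ, |A x₁ - A x₂| ≤ L * |x₁ - x₂|) {x y z : ℝ} (h : 2 * |z| < |x - y|) :
    ‖cauchyKernel A x y - cauchyKernel A (x + z) y‖ ≤ 2 * (1 + L) * |z| / (x - y) ^ 2 := by
  set a : ℂ := y - x + Complex.I * (A y - A x)
  set b : ℂ := y - ↑(x + z) + Complex.I * (A y - A (x + z))
  have hre (u : ℝ) : |u - y| ≤ ‖(y : ℂ) - u + Complex.I * (A y - A u)‖ := by
    simpa [abs_sub_comm] using Complex.abs_re_le_norm ((y : ℂ) - u + Complex.I * (A y - A u))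
  have hxy : 0 < |x - y| := (by positivity : 0 ≤ 2 * |z|).trans_lt h
  have ha : |x - y| ≤ ‖a‖ := hre x
  have hb : |x - y| / 2 ≤ ‖b‖ := by
    have hb' : |x + z - y| ≤ ‖b‖ := hre (x + z)
    have := abs_sub (x + z - y) z
    rw [show x + z - y - z = x - y by ring] at this
    linarith
  have hba : ‖b - a‖ ≤ (1 + L) * |z| := by
    have hdiff : b - a = -(z : ℂ) + Complex.I * ((A x - A (x + z) : ℝ) : ℂ) := by
      simp only [a, b]; push_cast; ring
    calc ‖b - a‖ ≤ ‖-(z : ℂ)‖ + ‖Complex.I * ((A x - A (x + z) : ℝ) : ℂ)‖ := by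
          rw [hdiff]; exact norm_add_le _ _
      _ = |z| + |A x - A (x + z)| := by
          simp only [norm_neg, norm_mul, Complex.norm_I, one_mul, Complex.norm_real,
            Real.norm_eq_abs]
      _ ≤ |z| + L * |z| := by simpa using hA x (x + z)
      _ = (1 + L) * |z| := by ring
  have ha0 : a ≠ 0 := norm_pos_iff.1 (hxy.trans_le ha)
  have hb0 : b ≠ 0 := norm_pos_iff.1 ((half_pos hxy).trans_le hb)
  calc ‖cauchyKernel A x y - cauchyKernel A (x + z) y‖ = ‖b - a‖ / (‖a‖ * ‖b‖) := by
        rw [cauchyKernel, cauchyKernel, inv_sub_inv ha0 hb0, norm_div, norm_mul]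
    _ ≤ (1 + L) * |z| / (|x - y| * (|x - y| / 2)) :=
        div_le_div₀ ((norm_nonneg _).trans hba) hba (by positivity)
          (mul_le_mul ha hb (by positivity) (norm_nonneg a))
    _ = 2 * (1 + L) * |z| / (x - y) ^ 2 := by rw [← sq_abs]; field_simp

noncomputable def tailInvSq (R : ℝ) : ℝ → ℝ≥0∞ :=
  {t | R < |t|}.indicator fun t => ENNReal.ofReal (t ^ 2)⁻¹

theorem measurableSet_lt_abs (R : ℝ) : MeasurableSet {t : ℝ | R < |t|} :=
  measurableSet_lt measurable_const measurable_abs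

theorem measurable_tailInvSq (R : ℝ) : Measurable (tailInvSq R) :=
  ((measurable_id.pow_const 2).inv.ennreal_ofReal).indicator (measurableSet_lt_abs R)

theorem lintegral_Ioi_inv_sq {R : ℝ} (hR : 0 < R) :
    ∫⁻ t in Ioi R, ENNReal.ofReal (t ^ 2)⁻¹ = ENNReal.ofReal R⁻¹ := by
  have hrpow : EqOn (fun t : ℝ => t ^ (-2 : ℝ)) (fun t => (t ^ 2)⁻¹) (Ioi R) := fun t ht => by
    simp [Real.rpow_neg (hR.trans ht).le]
  rw [← ofReal_integral_eq_lintegral_ofReal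
      ((integrableOn_Ioi_rpow_of_lt (by norm_num) hR).congr_fun hrpow measurableSet_Ioi)
      (ae_of_all _ fun t => by positivity),
    ← setIntegral_congr_fun measurableSet_Ioi hrpow, integral_Ioi_rpow_of_lt (by norm_num) hR]
  norm_num [Real.rpow_neg_one]

theorem lintegral_tailInvSq {R : ℝ} (hR : 0 < R) :
    ∫⁻ t, tailInvSq R t = ENNReal.ofReal (2 / R) := by
  have hsplit : {t : ℝ | R < |t|} = Ioi R ∪ Iio (-R) := by
    ext t; simp [lt_abs, lt_neg]
  have hdisj : Disjoint (Ioi R) (Iio (-R)) :=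
    Set.disjoint_left.2 fun t h1 h2 => by simp only [mem_Ioi, mem_Iio] at h1 h2; linarith
  rw [tailInvSq, lintegral_indicator (measurableSet_lt_abs R), hsplit,
    lintegral_union measurableSet_Iio hdisj, show Iio (-R) = Neg.neg '' Ioi R by simp,
    ← (Measure.measurePreserving_neg volume).setLIntegral_comp_emb
      (Homeomorph.neg ℝ).measurableEmbedding]
  simp only [neg_sq, lintegral_Ioi_inv_sq hR]
  rw [← ENNReal.ofReal_add (by positivity) (by positivity)]
  ring_nf

theorem ENNReal.rpow_lintegral_mul_le {α : Type*} [MeasurableSpace α] {μ : Measure α} {p : ℝ}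
    (hp : 1 < p) {w f : α → ℝ≥0∞} (hw : AEMeasurable w μ) (hf : AEMeasurable f μ) :
    (∫⁻ a, w a * f a ∂μ) ^ p ≤ (∫⁻ a, w a ∂μ) ^ (p - 1) * ∫⁻ a, w a * f a ^ p ∂μ := by
  have hpq := Real.HolderConjugate.conjExponent hp
  set q := p.conjExponent
  have hp0 : 0 < p := hpq.pos
  have hq0 : 0 < q := hpq.symm.pos
  have holder := ENNReal.lintegral_mul_le_Lp_mul_Lq μ hpq.symm (hw.pow_const (1 / q))
    ((hw.pow_const (1 / p)).mul hf)
  have hsplit (a : α) : w a ^ (1 / q) * (w a ^ (1 / p) * f a) = w a * f a := by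
    rw [← mul_assoc, ← ENNReal.rpow_add_of_nonneg _ _ (by positivity) (by positivity),
      add_comm, one_div, one_div, hpq.inv_add_inv_eq_one, ENNReal.rpow_one]
  have hw_pow (a : α) : (w a ^ (1 / q)) ^ q = w a := by
    rw [← ENNReal.rpow_mul, one_div_mul_cancel hq0.ne', ENNReal.rpow_one]
  have hwf_pow (a : α) : (w a ^ (1 / p) * f a) ^ p = w a * f a ^ p := by
    rw [ENNReal.mul_rpow_of_nonneg _ _ hp0.le, ← ENNReal.rpow_mul, one_div_mul_cancel hp0.ne',
      ENNReal.rpow_one]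
  have hexp : 1 / q * p = p - 1 := by
    field_simp; linarith [hpq.sub_one_mul_conj]
  simp only [Pi.mul_apply, hsplit, hw_pow, hwf_pow] at holder
  calc (∫⁻ a, w a * f a ∂μ) ^ p
      ≤ ((∫⁻ a, w a ∂μ) ^ (1 / q) * (∫⁻ a, w a * f a ^ p ∂μ) ^ (1 / p)) ^ p :=
        ENNReal.rpow_le_rpow holder hp0.le
    _ = (∫⁻ a, w a ∂μ) ^ (p - 1) * ∫⁻ a, w a * f a ^ p ∂μ := by
        rw [ENNReal.mul_rpow_of_nonneg _ _ hp0.le, ← ENNReal.rpow_mul, ← ENNReal.rpow_mul,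
          one_div_mul_cancel hp0.ne', ENNReal.rpow_one, hexp]

section Young

variable {G : Type*} [MeasurableSpace G] [AddGroup G] [MeasurableAdd₂ G] [MeasurableNeg G]
  {μ : Measure G} [SFinite μ] [μ.IsAddLeftInvariant] [μ.IsAddRightInvariant] [μ.IsNegInvariant]

theorem lintegral_rpow_lconvolution_le {p : ℝ} (hp : 1 < p) {f k : G → ℝ≥0∞}
    (hf : AEMeasurable f μ) (hk : Measurable k) :
    ∫⁻ x, (f ⋆ₗ[μ] k) x ^ p ∂μ ≤ (∫⁻ x, k x ∂μ) ^ p * ∫⁻ x, f x ^ p ∂μ := by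
  obtain ⟨F, hF, hfF⟩ := hf
  have hconv : f ⋆ₗ[μ] k = F ⋆ₗ[μ] k :=
    funext fun x => lintegral_congr_ae (hfF.mono fun y hy => by simp only [hy])
  have hFp : ∫⁻ x, f x ^ p ∂μ = ∫⁻ x, F x ^ p ∂μ := lintegral_congr_ae (hfF.fun_comp (· ^ p))
  rw [hconv, hFp]
  have hjoint : Measurable fun xy : G × G => k (-xy.2 + xy.1) * F xy.2 ^ p :=
    (hk.comp (measurable_snd.neg.add measurable_fst)).mul ((hF.pow_const p).comp measurable_snd)
  have hk' (x : G) : Measurable fun y => k (-y + x) := hk.comp (measurable_neg.add_const x)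
  have htranslate (x : G) : ∫⁻ y, k (-y + x) ∂μ = ∫⁻ y, k y ∂μ := by
    rw [lintegral_neg_eq_self (fun y => k (y + x)), lintegral_add_right_eq_self]
  have htonelli : ∫⁻ x, ∫⁻ y, k (-y + x) * F y ^ p ∂μ ∂μ =
      (∫⁻ x, k x ∂μ) * ∫⁻ x, F x ^ p ∂μ := by
    have hinner (y : G) : ∫⁻ x, k (-y + x) * F y ^ p ∂μ = (∫⁻ x, k x ∂μ) * F y ^ p := by
      have hky : Measurable fun x => k (-y + x) := hk.comp (measurable_const_add (-y))
      rw [lintegral_mul_const _ hky, lintegral_add_left_eq_self]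
    rw [lintegral_lintegral_swap hjoint.aemeasurable]
    simp_rw [hinner]
    exact lintegral_const_mul _ (hF.pow_const p)
  calc ∫⁻ x, (F ⋆ₗ[μ] k) x ^ p ∂μ = ∫⁻ x, (∫⁻ y, k (-y + x) * F y ∂μ) ^ p ∂μ := by
        simp_rw [lconvolution_def, mul_comm (F _)]
    _ ≤ ∫⁻ x, (∫⁻ y, k y ∂μ) ^ (p - 1) * ∫⁻ y, k (-y + x) * F y ^ p ∂μ ∂μ :=
        lintegral_mono fun x => (ENNReal.rpow_lintegral_mul_le hp
          (hk' x).aemeasurable hF.aemeasurable).trans_eq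
          (by rw [htranslate])
    _ = (∫⁻ x, k x ∂μ) ^ (p - 1) * ((∫⁻ x, k x ∂μ) * ∫⁻ x, F x ^ p ∂μ) := by
        rw [lintegral_const_mul _ hjoint.lintegral_prod_right', htonelli]
    _ = (∫⁻ x, k x ∂μ) ^ p * ∫⁻ x, F x ^ p ∂μ := by
        rw [← mul_assoc]
        congr 1
        simpa using (ENNReal.rpow_add_of_nonneg (x := ∫⁻ x, k x ∂μ) (p - 1) 1 (by linarith)
          zero_le_one).symm

end Young

theorem enorm_cauchyKernel_sub_le {A : ℝ → ℝ} {L : ℝ}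
    (hA : ∀ x₁ x₂ : ℝ, |A x₁ - A x₂| ≤ L * |x₁ - x₂|) {x y z R : ℝ} (hR : 2 * |z| ≤ R)
    (hy : R < |x - y|) :
    ‖cauchyKernel A x y - cauchyKernel A (x + z) y‖ₑ ≤
      ENNReal.ofReal (2 * (1 + L) * |z|) * tailInvSq R (x - y) := by
  rw [tailInvSq, indicator_of_mem (s := {t : ℝ | R < |t|}) hy, ← ofReal_norm,
    ← ENNReal.ofReal_mul' (by positivity), ← div_eq_mul_inv]
  exact ENNReal.ofReal_le_ofReal (norm_cauchyKernel_sub_le hA (hR.trans_lt hy))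

theorem setLIntegral_cauchyKernel_sub_mul_le {A : ℝ → ℝ} {L : ℝ}
    (hA : ∀ x₁ x₂ : ℝ, |A x₁ - A x₂| ≤ L * |x₁ - x₂|) {z R : ℝ} (hR : 2 * |z| ≤ R)
    (f : ℝ → ℝ≥0∞) (x : ℝ) :
    ∫⁻ y in {y | R < |x - y|}, ‖cauchyKernel A x y - cauchyKernel A (x + z) y‖ₑ * f y ≤
      ENNReal.ofReal (2 * (1 + L) * |z|) * (f ⋆ₗ tailInvSq R) x := by
  have hS : MeasurableSet {y | R < |x - y|} :=
    (measurableSet_lt_abs R).preimage (measurable_const_sub x)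
  calc ∫⁻ y in {y | R < |x - y|}, ‖cauchyKernel A x y - cauchyKernel A (x + z) y‖ₑ * f y
      ≤ ∫⁻ y in {y | R < |x - y|},
          ENNReal.ofReal (2 * (1 + L) * |z|) * (f y * tailInvSq R (-y + x)) := by
        refine setLIntegral_mono' hS fun y hy => ?_
        rw [mul_comm (f y), ← mul_assoc, neg_add_eq_sub]
        exact mul_le_mul_left (enorm_cauchyKernel_sub_le hA hR hy) _
    _ ≤ ENNReal.ofReal (2 * (1 + L) * |z|) * (f ⋆ₗ tailInvSq R) x := by
        rw [lintegral_const_mul' _ _ ENNReal.ofReal_ne_top]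
        exact mul_le_mul_right (setLIntegral_le_lintegral _ _) _

theorem kernel_smoothness_Lp_estimate_general
    (A : ℝ → ℝ) (L : ℝ)
    (hA : ∀ x₁ x₂ : ℝ, |A x₁ - A x₂| ≤ L * |x₁ - x₂|)
    (p : ℝ) (hp : 1 < p) :
    ∃ C : ℝ, 0 < C ∧
      ∀ ε : ℝ, 0 < ε → ε < 1 / 2 →
      ∀ z : ℝ, z ≠ 0 →
      ∀ g : ℝ → ℂ, MemLp g (ENNReal.ofReal p) volume →
        (∫⁻ x : ℝ,
            (∫⁻ y in {y : ℝ | ε⁻¹ * |z| < |x - y|},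
              (‖cauchyKernel A x y - cauchyKernel A (x + z) y‖₊ : ℝ≥0∞) *
                (‖g y‖₊ : ℝ≥0∞)) ^ p) ≤
          ENNReal.ofReal (C * ε ^ p) * eLpNorm g (ENNReal.ofReal p) volume ^ p := by
  have hL : 0 ≤ L := by simpa using (abs_nonneg _).trans (hA 1 0)
  have hp0 : 0 < p := by linarith
  refine ⟨(4 * (1 + L)) ^ p, by positivity, fun ε hε hε2 z hz g hg => ?_⟩
  set R := ε⁻¹ * |z|
  set M := 2 * (1 + L) * |z|
  have hR : 2 * |z| ≤ R := by
    have : 2 ≤ ε⁻¹ := by rw [le_inv_comm₀ two_pos hε]; linarith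
    exact mul_le_mul_of_nonneg_right this (abs_nonneg z)
  have hMR : M * (2 / R) = 4 * (1 + L) * ε := by
    have := abs_pos.2 hz
    simp only [M, R]; field_simp; ring
  have hnorm : eLpNorm g (ENNReal.ofReal p) volume ^ p = ∫⁻ y, ‖g y‖ₑ ^ p := by
    rw [eLpNorm_eq_eLpNorm' (by simpa using hp0) ENNReal.ofReal_ne_top,
      ENNReal.toReal_ofReal hp0.le, lintegral_rpow_enorm_eq_rpow_eLpNorm' hp0]
  calc _ ≤ ∫⁻ x, (ENNReal.ofReal M * ((‖g ·‖ₑ) ⋆ₗ tailInvSq R) x) ^ p :=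
        lintegral_mono fun x => ENNReal.rpow_le_rpow
          (setLIntegral_cauchyKernel_sub_mul_le hA hR _ x) hp0.le
    _ = ENNReal.ofReal M ^ p * ∫⁻ x, ((‖g ·‖ₑ) ⋆ₗ tailInvSq R) x ^ p := by
        simp_rw [ENNReal.mul_rpow_of_nonneg _ _ hp0.le]
        exact lintegral_const_mul' _ _ (by finiteness)
    _ ≤ ENNReal.ofReal M ^ p * ((∫⁻ t, tailInvSq R t) ^ p * ∫⁻ y, ‖g y‖ₑ ^ p) := by
        gcongr
        exact lintegral_rpow_lconvolution_le hp hg.1.enorm (measurable_tailInvSq R)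
    _ = ENNReal.ofReal ((4 * (1 + L)) ^ p * ε ^ p) * eLpNorm g (ENNReal.ofReal p) volume ^ p := by
        rw [lintegral_tailInvSq (by positivity), hnorm, ← mul_assoc,
          ← ENNReal.mul_rpow_of_nonneg _ _ hp0.le, ← ENNReal.ofReal_mul (by positivity), hMR,
          ← Real.mul_rpow (by positivity) hε.le, ENNReal.ofReal_rpow_of_nonneg (by positivity) hp0.le]

/-- `L^p` estimate for the kernel smoothness term: for `0 < ε < 1/2`, `z ≠ 0` and
`g ∈ L^p(ℝ)`,
`∫ (∫_{|x-y| > ε⁻¹|z|} |K(x,y) - K(x+z,y)| |g(y)| dy)^p dx ≤ C ε^p ‖g‖_{L^p}^p`. -/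
theorem kernel_smoothness_Lp_estimate
    (A : ℝ → ℝ) (L : ℝ) (hL : 0 < L)
    (hA : ∀ x₁ x₂ : ℝ, |A x₁ - A x₂| ≤ L * |x₁ - x₂|)
    (p : ℝ) (hp : 1 < p) :
    ∃ C : ℝ, 0 < C ∧
      ∀ ε : ℝ, 0 < ε → ε < 1 / 2 →
      ∀ z : ℝ, z ≠ 0 →
      ∀ g : ℝ → ℂ, MemLp g (ENNReal.ofReal p) volume →
        (∫⁻ x : ℝ,
            (∫⁻ y in {y : ℝ | ε⁻¹ * |z| < |x - y|},
              (‖cauchyKernel A x y - cauchyKernel A (x + z) y‖₊ : ℝ≥0∞) *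
                (‖g y‖₊ : ℝ≥0∞)) ^ p) ≤
          ENNReal.ofReal (C * ε ^ p) * eLpNorm g (ENNReal.ofReal p) volume ^ p :=
  kernel_smoothness_Lp_estimate_general A L hA p hp
end
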